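/- Let d ≥ 3 and k ≥ 1 be integers, let x_min > 0 be a real, let x be a real with k·x_min ≤ x < (k+1)·x_min, and let π₀ be a real with π₀ ≥ d·G(k) + 2k − 1, where G(m) = (d^m − 1)/(d − 1). For natural numbers d_0, d_1, …, d_k with Σ_{j=0}^k d_j = d, define U(d_0, …, d_k) = Q/W where Q = x + Σ_{j=1}^k d_j·G(j)·(x − (j−1)·x_min) and W = π₀ + 1 + Σ_{j=1}^k d_j·G(j). Then for every tuple (d_0, …, d_k) of naturals with Σ_{j=0}^k d_j = d that is different from (0, …, 0, d), one has U(d_0, …, d_k) < U(0, …, 0, d). In other words, U is uniquely maximized by the full propagation strategy d_k = d, d_j = 0 for j < k. -/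

import Mathlib

/-!
With `P = π₀ + 1` and `a = x - (k - 1) xmin`, a strategy has `W = P + R` and
`Q = x + R a + T xmin`, where `R` counts the informed players and `T` weights each of them by
the number of levels her subtree stops short of `k`; full propagation has `R = d G(k)`, `T = 0`.
For `d ≥ 3` one has `G(j) (2 (k - j) + 1) ≤ G(k)`, strictly for `j < k`, so every other
strategy has `2 T + R < d G(k)`. Cross-multiplied, the claim reads
`T xmin (P + d G(k)) < (d G(k) - R) (a P - x)`, and the bound on `π₀` together with
`x ≥ k xmin` gives `xmin (P + d G(k)) ≤ 2 (a P - x)`.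
-/

/-- Number of nodes in the first `m` levels of a complete `d`-ary tree. -/
noncomputable def G (d m : ℕ) : ℝ := ((d : ℝ) ^ m - 1) / ((d : ℝ) - 1)

/-- Utility `Q / W` of the root player on a complete `d`-ary tree when she plays the
reasonable strategy `(dv 0, …, dv k)` and all her descendants fully propagate. -/
noncomputable def U (d k : ℕ) (xmin x π₀ : ℝ) (dv : ℕ → ℕ) : ℝ :=
  (x + ∑ j ∈ Finset.Icc 1 k, (dv j : ℝ) * G d j * (x - ((j : ℝ) - 1) * xmin)) /
    (π₀ + 1 + ∑ j ∈ Finset.Icc 1 k, (dv j : ℝ) * G d j)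

open Finset

theorem Finset.sum_range_succ_eq_sum_Icc_one {M : Type*} [AddCommMonoid M] {f : ℕ → M}
    (hf : f 0 = 0) (k : ℕ) : ∑ j ∈ range (k + 1), f j = ∑ j ∈ Icc 1 k, f j := by
  rw [Nat.range_succ_eq_Icc_zero, ← add_sum_Ioc_eq_sum_Icc k.zero_le, hf, zero_add]
  rfl

section G

variable {d : ℕ}

@[simp] theorem G_zero_right (d : ℕ) : G d 0 = 0 := by simp [G]

theorem G_nonneg (d m : ℕ) : 0 ≤ G d m := by
  rcases Nat.lt_or_ge d 2 with hd | hd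
  · interval_cases d
    · rcases m with _ | m <;> simp [G]
    · simp [G]
  · have hd' : (2 : ℝ) ≤ d := by exact_mod_cast hd
    have := one_le_pow₀ (n := m) (by linarith : (1 : ℝ) ≤ d)
    exact div_nonneg (by linarith) (by linarith)

theorem G_pos (hd : 2 ≤ d) {m : ℕ} (hm : m ≠ 0) : 0 < G d m := by
  have hd' : (2 : ℝ) ≤ d := by exact_mod_cast hd
  exact div_pos (by linarith [one_lt_pow₀ (by linarith : (1 : ℝ) < d) hm]) (by linarith)

theorem G_add (hd : d ≠ 1) (j m : ℕ) : G d (j + m) = G d j * (d : ℝ) ^ m + G d m := by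
  have hd' : (d : ℝ) - 1 ≠ 0 := sub_ne_zero.mpr (by exact_mod_cast hd)
  simp only [G]
  field_simp
  ring

/-- Going `m` levels deeper multiplies a tree's size by `d ^ m ≥ 2 m + 1` (Bernoulli). -/
theorem G_mul_two_mul_add_one_add_le (hd : 3 ≤ d) (j m : ℕ) :
    G d j * (2 * m + 1) + G d m ≤ G d (j + m) := by
  have hd' : (3 : ℝ) ≤ d := by exact_mod_cast hd
  have bernoulli : 1 + (m : ℝ) * 2 ≤ (d : ℝ) ^ m := by
    simpa using one_add_mul_le_pow (by norm_num : (-2 : ℝ) ≤ 2) m |>.trans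
      (pow_le_pow_left₀ (by norm_num) (by linarith : (1 : ℝ) + 2 ≤ d) m)
  rw [G_add (by omega)]
  nlinarith [G_nonneg d j]

end G

section Strategy

variable (d k : ℕ) (dv : ℕ → ℕ)

/-- `W - π₀ - 1` in the paper: each of the `dv j` children given `(j - 1) xmin` starts a fully
propagating subtree of `G d j` players. -/
noncomputable def reach : ℝ := ∑ j ∈ Icc 1 k, (dv j : ℝ) * G d j

/-- The same players, each counted with the number of levels her subtree stops short of `k`. -/
noncomputable def shortfall : ℝ := ∑ j ∈ Icc 1 k, (dv j : ℝ) * G d j * ((k : ℝ) - j)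

def fullPropagation : ℕ → ℕ := fun j => if j = k then d else 0

theorem reach_nonneg : 0 ≤ reach d k dv :=
  sum_nonneg fun j _ => mul_nonneg (Nat.cast_nonneg _) (G_nonneg d j)

theorem shortfall_nonneg : 0 ≤ shortfall d k dv :=
  sum_nonneg fun j hj => mul_nonneg (mul_nonneg (Nat.cast_nonneg _) (G_nonneg d j))
    (sub_nonneg.mpr (by exact_mod_cast (mem_Icc.mp hj).2))

theorem U_eq (xmin x π₀ : ℝ) :
    U d k xmin x π₀ dv = (x + reach d k dv * (x - ((k : ℝ) - 1) * xmin)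
      + shortfall d k dv * xmin) / (π₀ + 1 + reach d k dv) := by
  simp only [U, reach, shortfall, sum_mul, add_assoc, ← sum_add_distrib]
  congr 2
  exact sum_congr rfl fun j _ => by ring

variable {k}

theorem reach_fullPropagation (hk : 1 ≤ k) : reach d k (fullPropagation d k) = d * G d k := by
  rw [reach, sum_eq_single_of_mem k (mem_Icc.mpr ⟨hk, le_rfl⟩)] <;> simp_all [fullPropagation]

theorem shortfall_fullPropagation : shortfall d k (fullPropagation d k) = 0 :=
  sum_eq_zero fun j _ => by by_cases h : j = k <;> simp [fullPropagation, h]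

variable {d dv}

theorem exists_lt_ne_zero_of_ne_fullPropagation (hsum : ∑ j ∈ range (k + 1), dv j = d)
    (hne : ¬(dv k = d ∧ ∀ j < k, dv j = 0)) : ∃ j < k, dv j ≠ 0 := by
  by_contra! h
  refine hne ⟨?_, h⟩
  rwa [sum_range_succ, sum_eq_zero fun j hj => h j (mem_range.mp hj), zero_add] at hsum

/-- Summand-wise this is `G d j (2 (k - j) + 1) ≤ G d k`, strict for `j < k`; the term `j = 0`
vanishes because `G d 0 = 0`. -/
theorem two_mul_shortfall_add_reach_lt (hd : 3 ≤ d) (hsum : ∑ j ∈ range (k + 1), dv j = d)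
    {j₀ : ℕ} (hj₀ : j₀ < k) (hdv : dv j₀ ≠ 0) :
    2 * shortfall d k dv + reach d k dv < d * G d k := by
  have hpoint (j : ℕ) (hj : j ≤ k) :
      G d j * (2 * ((k : ℝ) - j) + 1) + G d (k - j) ≤ G d k := by
    simpa [Nat.cast_sub hj, hj] using G_mul_two_mul_add_one_add_le hd j (k - j)
  calc 2 * shortfall d k dv + reach d k dv
      = ∑ j ∈ range (k + 1), (dv j : ℝ) * (G d j * (2 * ((k : ℝ) - j) + 1)) := by
        rw [sum_range_succ_eq_sum_Icc_one (by simp), shortfall, reach, mul_sum,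
          ← sum_add_distrib]
        exact sum_congr rfl fun j _ => by ring
    _ < ∑ j ∈ range (k + 1), (dv j : ℝ) * G d k := by
        refine sum_lt_sum (fun j hj => ?_) ⟨j₀, mem_range.mpr (by omega), ?_⟩
        · have := hpoint j (Nat.lt_succ_iff.mp (mem_range.mp hj))
          exact mul_le_mul_of_nonneg_left (by linarith [G_nonneg d (k - j)]) (Nat.cast_nonneg _)
        · have := hpoint j₀ hj₀.le
          have := G_pos (by omega : 2 ≤ d) (by omega : k - j₀ ≠ 0)
          exact mul_lt_mul_of_pos_left (by linarith) (by positivity)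
    _ = d * G d k := by rw [← sum_mul, ← hsum, Nat.cast_sum]

end Strategy

theorem div_lt_div_of_two_mul_shortfall_add_reach_lt {P x a m S T D : ℝ} (hP : 0 < P)
    (hS : 0 ≤ S) (hT : 0 ≤ T) (hm : 0 < m) (hST : 2 * T + S < D)
    (hmargin : m * (P + D) ≤ 2 * (a * P - x)) :
    (x + S * a + T * m) / (P + S) < (x + D * a) / (P + D) := by
  have hE : 0 < a * P - x := by nlinarith
  rw [div_lt_div_iff₀ (by linarith) (by linarith)]
  nlinarith [mul_le_mul_of_nonneg_left hmargin hT, mul_lt_mul_of_pos_right hST hE]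

theorem stmt_13_general (d k : ℕ) (hd : 3 ≤ d) (hk : 1 ≤ k)
    (xmin x π₀ : ℝ) (hxmin : 0 < xmin)
    (hx1 : (k : ℝ) * xmin ≤ x)
    (hπ : (d : ℝ) * G d k + 2 * (k : ℝ) - 1 ≤ π₀) :
    ∀ dv : ℕ → ℕ, (∑ j ∈ Finset.range (k + 1), dv j = d) →
      ¬(dv k = d ∧ ∀ j < k, dv j = 0) →
      U d k xmin x π₀ dv < U d k xmin x π₀ (fun j => if j = k then d else 0) := by
  intro dv hsum hne
  obtain ⟨j₀, hj₀, hdv⟩ := exists_lt_ne_zero_of_ne_fullPropagation hsum hne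
  have hD : 0 ≤ (d : ℝ) * G d k := mul_nonneg (Nat.cast_nonneg d) (G_nonneg d k)
  have hk' : (1 : ℝ) ≤ k := by exact_mod_cast hk
  have hmargin :
      xmin * (π₀ + 1 + d * G d k) ≤ 2 * ((x - ((k : ℝ) - 1) * xmin) * (π₀ + 1) - x) := by
    nlinarith [mul_nonneg (by linarith : 0 ≤ π₀) (sub_nonneg.mpr hx1),
      mul_nonneg (by linarith : 0 ≤ π₀ + 1 - d * G d k - 2 * k) hxmin.le]
  change _ < U d k xmin x π₀ (fullPropagation d k)
  rw [U_eq, U_eq, reach_fullPropagation d hk, shortfall_fullPropagation, zero_mul, add_zero]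
  exact div_lt_div_of_two_mul_shortfall_add_reach_lt (by linarith) (reach_nonneg d k dv)
    (shortfall_nonneg d k dv) hxmin (two_mul_shortfall_add_reach_lt hd hsum hj₀ hdv) hmargin

/-- Corollary 1 of the paper: the root's utility is uniquely maximized by full
propagation, i.e. `dv k = d` and `dv j = 0` for `j < k`. -/
theorem stmt_13 (d k : ℕ) (hd : 3 ≤ d) (hk : 1 ≤ k)
    (xmin x π₀ : ℝ) (hxmin : 0 < xmin)
    (hx1 : (k : ℝ) * xmin ≤ x) (hx2 : x < ((k : ℝ) + 1) * xmin)
    (hπ : (d : ℝ) * G d k + 2 * (k : ℝ) - 1 ≤ π₀) :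
    ∀ dv : ℕ → ℕ, (∑ j ∈ Finset.range (k + 1), dv j = d) →
      ¬(dv k = d ∧ ∀ j < k, dv j = 0) →
      U d k xmin x π₀ dv < U d k xmin x π₀ (fun j => if j = k then d else 0) :=
  stmt_13_general d k hd hk xmin x π₀ hxmin hx1 hπ
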